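/- arXiv:math/0605717 — 3 statements merged into one kernel-verified Lean document; each statement's English description precedes it below -/
import Mathlib

section
/- If Γ is a connected finite simple graph on n vertices, then its index r (the largest adjacency eigenvalue) satisfies r ≥ 2 cos(π/(n+1)). -/
/-!
By the Rayleigh principle it suffices to find `x > 0` with `A x ≥ 2 cos (π / (n + 1)) x`
entrywise. Fix a spanning tree of `Γ` rooted at some vertex, let `m u` be the size of the
subtree at `u`, and let `S k = sin (k π / (n + 1))`. Prescribing `x u / x (parent u) =
S (m u) / S (m u + 1)`, the inequality at a vertex `v` with `m v = k + 1` reduces, via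
`S (k + 2) + S k = 2 cos (π / (n + 1)) S (k + 1)`, to
`S k / S (k + 1) ≤ ∑ S (m u) / S (m u + 1)` over the children `u` of `v`, whose subtree sizes
add up to `k`. This holds because `k ↦ S k / S (k + 1)` is subadditive on `0, …, n - 1`.
-/

/-- `μ` is an eigenvalue of the real matrix `A`. -/
def IsEigen {n : Type*} [Fintype n] (A : Matrix n n ℝ) (μ : ℝ) : Prop :=
  ∃ v : n → ℝ, v ≠ 0 ∧ A.mulVec v = μ • v

open Finset Matrix Real Relation

namespace Matrix.IsHermitian

variable {ι : Type*} [Fintype ι] [DecidableEq ι] {A : Matrix ι ι ℝ} {r : ℝ}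

theorem dotProduct_mulVec_le (hA : A.IsHermitian) (hr : ∀ μ, IsEigen A μ → μ ≤ r)
    (x : ι → ℝ) : x ⬝ᵥ A *ᵥ x ≤ r * (x ⬝ᵥ x) := by
  set b := hA.eigenvectorBasis
  have parseval (y : ι → ℝ) : x ⬝ᵥ y = ∑ j, (b j ⬝ᵥ x) * (b j ⬝ᵥ y) := by
    simpa [EuclideanSpace.inner_eq_star_dotProduct, dotProduct_comm] using
      (b.sum_inner_mul_inner (WithLp.toLp 2 x) (WithLp.toLp 2 y)).symm
  have coeff (j : ι) : b j ⬝ᵥ A *ᵥ x = hA.eigenvalues j * (b j ⬝ᵥ x) := by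
    rw [dotProduct_mulVec, ← mulVec_transpose, ← conjTranspose_eq_transpose_of_trivial, hA,
      hA.mulVec_eigenvectorBasis, smul_dotProduct, smul_eq_mul]
  have eigenvalue_le (j : ι) : hA.eigenvalues j ≤ r := by
    refine hr _ ⟨b j, fun h => ?_, hA.mulVec_eigenvectorBasis j⟩
    exact b.orthonormal.ne_zero j (by simpa using congrArg (WithLp.toLp 2) h)
  rw [parseval, parseval, mul_sum]
  refine sum_le_sum fun j _ => ?_
  rw [coeff]
  nlinarith [eigenvalue_le j, mul_self_nonneg (b j ⬝ᵥ x)]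

theorem le_of_smul_le_mulVec (hA : A.IsHermitian) (hr : ∀ μ, IsEigen A μ → μ ≤ r)
    {c : ℝ} {x : ι → ℝ} (hx0 : 0 ≤ x) (hx : x ≠ 0) (hc : c • x ≤ A *ᵥ x) : c ≤ r := by
  have hxx : 0 < x ⬝ᵥ x := by
    simpa using dotProduct_self_star_pos_iff.2 hx
  refine le_of_mul_le_mul_right ?_ hxx
  calc c * (x ⬝ᵥ x) = x ⬝ᵥ c • x := by rw [dotProduct_smul, smul_eq_mul]
    _ ≤ x ⬝ᵥ A *ᵥ x := dotProduct_le_dotProduct_of_nonneg_left hc hx0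
    _ ≤ r * (x ⬝ᵥ x) := hA.dotProduct_mulVec_le hr x

end Matrix.IsHermitian

/-- For `1 ≤ k ≤ n`, these are the entries of the Perron eigenvector of the path on `n` vertices,
whose eigenvalue is `2 cos (π / (n + 1))` by `pathSin_add_two_add`. -/
noncomputable def pathSin (n k : ℕ) : ℝ := sin (k * (π / (n + 1)))

noncomputable def pathSinRatio (n k : ℕ) : ℝ := pathSin n k / pathSin n (k + 1)

section PathSin

variable {n k : ℕ}

@[simp] theorem pathSin_zero : pathSin n 0 = 0 := by simp [pathSin]

theorem pathSin_succ_self : pathSin n (n + 1) = 0 := by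
  rw [pathSin]; push_cast
  rw [mul_div_cancel₀ _ (by positivity), sin_pi]

theorem pathSin_nonneg (hk : k ≤ n + 1) : 0 ≤ pathSin n k := by
  refine sin_nonneg_of_nonneg_of_le_pi (by positivity) ?_
  calc (k : ℝ) * (π / (n + 1)) ≤ (n + 1) * (π / (n + 1)) := by gcongr; exact_mod_cast hk
    _ = π := mul_div_cancel₀ _ (by positivity)

theorem pathSin_pos (hk : 1 ≤ k) (hkn : k ≤ n) : 0 < pathSin n k := by
  refine sin_pos_of_pos_of_lt_pi (by positivity) ?_
  calc (k : ℝ) * (π / (n + 1)) < (n + 1) * (π / (n + 1)) := by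
        gcongr; exact_mod_cast Nat.lt_succ_of_le hkn
    _ = π := mul_div_cancel₀ _ (by positivity)

theorem pathSin_add_two_add (n k : ℕ) :
    pathSin n (k + 2) + pathSin n k = 2 * cos (π / (n + 1)) * pathSin n (k + 1) := by
  simp only [pathSin]
  set t := π / (n + 1)
  calc sin ((k + 2 : ℕ) * t) + sin (k * t)
      = sin ((k + 1 : ℕ) * t + t) + sin ((k + 1 : ℕ) * t - t) := by push_cast; ring_nf
    _ = 2 * cos t * sin ((k + 1 : ℕ) * t) := by rw [sin_add, sin_sub]; ring

@[simp] theorem pathSinRatio_zero : pathSinRatio n 0 = 0 := by simp [pathSinRatio]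

theorem pathSinRatio_pos (hk : 1 ≤ k) (hkn : k + 1 ≤ n) : 0 < pathSinRatio n k :=
  div_pos (pathSin_pos hk (by omega)) (pathSin_pos (by omega) hkn)

theorem pathSinRatio_add_le {a b : ℕ} (hab : a + b + 1 ≤ n) :
    pathSinRatio n (a + b) ≤ pathSinRatio n a + pathSinRatio n b := by
  have identity : pathSin n a * pathSin n (b + 1) * pathSin n (a + b + 1)
        + pathSin n b * pathSin n (a + 1) * pathSin n (a + b + 1)
        - pathSin n (a + b) * pathSin n (a + 1) * pathSin n (b + 1)
      = pathSin n a * pathSin n b * pathSin n (a + b + 2) := by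
    simp only [pathSin]
    push_cast
    simp only [add_mul, one_mul, sin_add, cos_add, two_mul]
    ring
  have ha := pathSin_pos (n := n) (k := a + 1) (by omega) (by omega)
  have hb := pathSin_pos (n := n) (k := b + 1) (by omega) (by omega)
  have hab1 := pathSin_pos (n := n) (k := a + b + 1) (by omega) hab
  have rest : 0 ≤ pathSin n a * pathSin n b * pathSin n (a + b + 2) := by
    have := pathSin_nonneg (n := n) (k := a) (by omega)
    have := pathSin_nonneg (n := n) (k := b) (by omega)
    have := pathSin_nonneg (n := n) (k := a + b + 2) (by omega)
    positivity
  rw [pathSinRatio, pathSinRatio, pathSinRatio, div_add_div _ _ ha.ne' hb.ne',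
    div_le_div_iff₀ hab1 (by positivity)]
  linarith

theorem pathSinRatio_sum_le {ι : Type*} (s : Finset ι) (g : ι → ℕ) (hs : ∑ i ∈ s, g i + 1 ≤ n) :
    pathSinRatio n (∑ i ∈ s, g i) ≤ ∑ i ∈ s, pathSinRatio n (g i) := by
  classical
  induction s using Finset.induction_on with
  | empty => simp
  | insert i s hi ih =>
    simp only [sum_insert hi] at hs ⊢
    exact (pathSinRatio_add_le hs).trans (add_le_add le_rfl (ih (by omega)))

theorem two_cos_eq_pathSin_div_add_pathSinRatio (hk : k + 1 ≤ n) :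
    2 * cos (π / (n + 1)) = pathSin n (k + 2) / pathSin n (k + 1) + pathSinRatio n k := by
  have := pathSin_pos (n := n) (k := k + 1) (by omega) hk
  rw [pathSinRatio, ← add_div, pathSin_add_two_add, mul_div_cancel_right₀ _ this.ne']

end PathSin

section RootedTree

open Classical

variable {V : Type*}

/-- A rooted tree encoded by a parent map `p`; the value `p root` is ignored. -/
def IsChild (p : V → V) (root u v : V) : Prop := u ≠ root ∧ p u = v

abbrev IsDescendant (p : V → V) (root : V) : V → V → Prop := ReflTransGen (IsChild p root)

noncomputable def children [Fintype V] (p : V → V) (root v : V) : Finset V :=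
  {u | IsChild p root u v}

noncomputable def descendants [Fintype V] (p : V → V) (root v : V) : Finset V :=
  {u | IsDescendant p root u v}

noncomputable def ancestors [Fintype V] (p : V → V) (root v : V) : Finset V :=
  {u | u ≠ root ∧ IsDescendant p root v u}

-- Acyclicity of the parent map is expressed by a rank `d` with `d (p v) < d v` for `v ≠ root`.
variable {p : V → V} {root : V} {d : V → ℕ}

theorem IsDescendant.rank_le (hd : ∀ v, v ≠ root → d (p v) < d v) {u v : V}
    (h : IsDescendant p root u v) : d v ≤ d u := by
  induction h with
  | refl => rfl
  | tail _ hbc ih => obtain ⟨hb, rfl⟩ := hbc; exact (hd _ hb).le.trans ih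

theorem isDescendant_root (hd : ∀ v, v ≠ root → d (p v) < d v) (u : V) :
    IsDescendant p root u root := by
  induction h : d u using Nat.strong_induction_on generalizing u with
  | _ k ih =>
    by_cases hu : u = root
    · rw [hu]
    · exact .head ⟨hu, rfl⟩ (ih _ (h ▸ hd u hu) _ rfl)

theorem eq_root_of_isDescendant {v : V} (h : IsDescendant p root root v) : v = root :=
  (h.cases_head.resolve_right fun ⟨_, hc, _⟩ => hc.1 rfl).symm

theorem isDescendant_iff_of_ne_root {u v : V} (hv : v ≠ root) :
    IsDescendant p root v u ↔ u = v ∨ IsDescendant p root (p v) u := by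
  rw [IsDescendant, ReflTransGen.cases_head_iff]
  refine or_congr eq_comm ⟨?_, fun h => ⟨p v, ⟨hv, rfl⟩, h⟩⟩
  rintro ⟨_, ⟨-, rfl⟩, h⟩
  exact h

theorem not_isDescendant_of_isChild (hd : ∀ v, v ≠ root → d (p v) < d v) {u v : V}
    (h : IsChild p root u v) : ¬ IsDescendant p root v u := fun h' =>
  (h'.rank_le hd).not_gt (h.2 ▸ hd u h.1)

theorem eq_of_isChild_of_isDescendant (hd : ∀ v, v ≠ root → d (p v) < d v) {u₁ u₂ v w : V}
    (h₁ : IsChild p root u₁ v) (h₂ : IsChild p root u₂ v)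
    (hw₁ : IsDescendant p root w u₁) (hw₂ : IsDescendant p root w u₂) : u₁ = u₂ := by
  have right_unique : Relator.RightUnique (IsChild p root) := fun _ _ _ h h' => h.2.symm.trans h'.2
  wlog h : IsDescendant p root u₁ u₂ generalizing u₁ u₂
  · exact (this h₂ h₁ hw₂ hw₁
      ((ReflTransGen.total_of_right_unique right_unique hw₁ hw₂).resolve_left h)).symm
  rw [isDescendant_iff_of_ne_root h₁.1, h₁.2] at h
  exact h.resolve_right (not_isDescendant_of_isChild hd h₂) |>.symm

variable [Fintype V]

@[simp] theorem self_mem_descendants (v : V) : v ∈ descendants p root v := by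
  simp [descendants, ReflTransGen.refl]

theorem descendants_eq_insert_biUnion (v : V) :
    descendants p root v = insert v ((children p root v).biUnion (descendants p root)) := by
  ext w
  simp only [descendants, children, mem_insert, mem_biUnion, mem_filter, mem_univ, true_and,
    IsDescendant, ReflTransGen.cases_tail_iff (IsChild p root) w v]
  exact or_congr eq_comm ⟨fun ⟨u, hw, hu⟩ => ⟨u, hu, hw⟩, fun ⟨u, hu, hw⟩ => ⟨u, hw, hu⟩⟩

theorem card_descendants (hd : ∀ v, v ≠ root → d (p v) < d v) (v : V) :
    #(descendants p root v) = 1 + ∑ u ∈ children p root v, #(descendants p root u) := by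
  have hv : v ∉ (children p root v).biUnion (descendants p root) := by
    simp only [mem_biUnion, descendants, children, mem_filter, mem_univ, true_and, not_exists,
      not_and]
    exact fun u hu => not_isDescendant_of_isChild hd hu
  rw [descendants_eq_insert_biUnion, card_insert_of_notMem hv, card_biUnion, add_comm]
  intro u₁ hu₁ u₂ hu₂ hne
  simp only [children, coe_filter, mem_univ, true_and] at hu₁ hu₂
  refine disjoint_left.2 fun w hw₁ hw₂ => hne ?_
  simp only [descendants, mem_filter, mem_univ, true_and] at hw₁ hw₂
  exact eq_of_isChild_of_isDescendant hd hu₁ hu₂ hw₁ hw₂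

theorem descendants_root (hd : ∀ v, v ≠ root → d (p v) < d v) :
    descendants p root root = univ := by
  simpa [descendants, eq_univ_iff_forall] using isDescendant_root hd

theorem card_descendants_lt {v : V} (hv : v ≠ root) :
    #(descendants p root v) < Fintype.card V := by
  refine card_lt_univ_of_notMem (x := root) ?_
  simpa [descendants] using fun h => hv (eq_root_of_isDescendant h)

theorem ancestors_eq_cons (hd : ∀ v, v ≠ root → d (p v) < d v) {v : V} (hv : v ≠ root) :
    ancestors p root v = cons v (ancestors p root (p v))
      (by simpa [ancestors] using fun _ => not_isDescendant_of_isChild hd ⟨hv, rfl⟩) := by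
  ext u
  simp only [ancestors, mem_cons, mem_filter, mem_univ, true_and, isDescendant_iff_of_ne_root hv]
  constructor
  · rintro ⟨hu, rfl | h⟩ <;> simp_all
  · rintro (rfl | h) <;> tauto

end RootedTree

section TestVector

variable {V : Type*} [Fintype V] {p : V → V} {root : V} {d : V → ℕ}

/-- `x v = ∏ S (m u) / S (m u + 1)` over the ancestors `u ≠ root` of `v`, where `m u` is the size
of the subtree at `u` and `S = pathSin n`. On a path rooted at an end vertex this is the Perron
eigenvector. -/
noncomputable def treeTestVector (p : V → V) (root v : V) : ℝ :=
  ∏ u ∈ ancestors p root v, pathSinRatio (Fintype.card V) #(descendants p root u)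

theorem treeTestVector_pos (v : V) : 0 < treeTestVector p root v := by
  refine prod_pos fun u hu => pathSinRatio_pos ?_ ?_
  · exact card_pos.2 ⟨u, self_mem_descendants u⟩
  · simp only [ancestors, mem_filter] at hu
    exact card_descendants_lt hu.2.1

theorem treeTestVector_of_ne_root (hd : ∀ v, v ≠ root → d (p v) < d v) {v : V} (hv : v ≠ root) :
    treeTestVector p root v =
      pathSinRatio (Fintype.card V) #(descendants p root v) * treeTestVector p root (p v) := by
  rw [treeTestVector, ancestors_eq_cons hd hv, prod_cons, treeTestVector]

theorem sum_children_treeTestVector (hd : ∀ v, v ≠ root → d (p v) < d v) (v : V) :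
    ∑ u ∈ children p root v, treeTestVector p root u = treeTestVector p root v *
      ∑ u ∈ children p root v, pathSinRatio (Fintype.card V) #(descendants p root u) := by
  rw [mul_sum]
  refine sum_congr rfl fun u hu => ?_
  simp only [children, mem_filter, mem_univ, true_and] at hu
  rw [treeTestVector_of_ne_root hd hu.1, hu.2, mul_comm]

theorem pathSinRatio_le_sum_children (hd : ∀ v, v ≠ root → d (p v) < d v) {v : V} {k : ℕ}
    (hk : #(descendants p root v) = k + 1) : pathSinRatio (Fintype.card V) k ≤
      ∑ u ∈ children p root v, pathSinRatio (Fintype.card V) #(descendants p root u) := by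
  have hsum : ∑ u ∈ children p root v, #(descendants p root u) = k := by
    have := card_descendants hd v; omega
  exact hsum ▸ pathSinRatio_sum_le _ _ (hsum ▸ hk ▸ card_le_univ _)

theorem two_cos_mul_treeTestVector_le [DecidableEq V] (hd : ∀ v, v ≠ root → d (p v) < d v)
    (v : V) : 2 * cos (π / (Fintype.card V + 1)) * treeTestVector p root v ≤
      (if v = root then 0 else treeTestVector p root (p v)) +
        ∑ u ∈ children p root v, treeTestVector p root u := by
  set n := Fintype.card V with hn
  obtain ⟨k, hk⟩ : ∃ k, #(descendants p root v) = k + 1 :=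
    Nat.exists_eq_add_one.2 (card_pos.2 ⟨v, self_mem_descendants v⟩)
  have hkn : k + 1 ≤ n := hk ▸ card_le_univ _
  -- At the root the subtree is everything, so `k + 2 = n + 1` and the first factor vanishes.
  have parent_term : treeTestVector p root v * (pathSin n (k + 2) / pathSin n (k + 1)) =
      if v = root then 0 else treeTestVector p root (p v) := by
    split_ifs with hv
    · subst hv
      have : k + 2 = n + 1 := by
        have := card_univ (α := V); rw [← descendants_root hd] at this; omega
      rw [this, pathSin_succ_self, zero_div, mul_zero]
    · have := pathSin_pos (n := n) (k := k + 1) (by omega) hkn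
      have := pathSin_pos (n := n) (k := k + 2) (by omega)
        (by have := card_descendants_lt (p := p) hv; omega)
      rw [treeTestVector_of_ne_root hd hv, ← hn, hk, pathSinRatio]
      field_simp
  rw [two_cos_eq_pathSin_div_add_pathSinRatio hkn, add_mul, mul_comm (pathSin n (k + 2) / _),
    parent_term, mul_comm (pathSinRatio n k), sum_children_treeTestVector hd]
  gcongr
  · exact (treeTestVector_pos v).le
  · exact pathSinRatio_le_sum_children hd hk

end TestVector

namespace SimpleGraph

variable {V : Type*} {G : SimpleGraph V}

theorem Reachable.exists_adj_dist_lt {u v : V} (h : G.Reachable u v) (hne : u ≠ v) :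
    ∃ w, G.Adj u w ∧ G.dist w v < G.dist u v := by
  obtain ⟨q, hq⟩ := h.exists_walk_length_eq_dist
  cases q with
  | nil => exact absurd rfl hne
  | cons hadj q =>
    refine ⟨_, hadj, ?_⟩
    have := dist_le q
    rw [Walk.length_cons] at hq
    omega

theorem Connected.exists_pos_smul_le_adjMatrix_mulVec [Fintype V] [DecidableRel G.Adj]
    (hG : G.Connected) : ∃ x : V → ℝ, (∀ v, 0 < x v) ∧
      (2 * cos (π / (Fintype.card V + 1))) • x ≤ G.adjMatrix ℝ *ᵥ x := by
  classical
  obtain ⟨root⟩ := hG.nonempty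
  choose! parent hadj hlt using fun v (hv : v ≠ root) => (hG v root).exists_adj_dist_lt hv
  refine ⟨treeTestVector parent root, treeTestVector_pos, fun v => ?_⟩
  rw [Pi.smul_apply, smul_eq_mul, adjMatrix_mulVec_apply]
  refine (two_cos_mul_treeTestVector_le (d := (G.dist · root)) hlt v).trans ?_
  have children_subset : children parent root v ⊆ G.neighborFinset v := fun u hu => by
    simp only [children, mem_filter, mem_univ, true_and] at hu
    exact (mem_neighborFinset _ _ _).2 (hu.2 ▸ hadj u hu.1).symm
  have nonneg : ∀ u ∈ G.neighborFinset v, 0 ≤ treeTestVector parent root u :=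
    fun u _ => (treeTestVector_pos u).le
  split_ifs with hv
  · rw [zero_add]
    exact sum_le_sum_of_subset_of_nonneg children_subset fun u hu _ => nonneg u hu
  · have parent_not_child : parent v ∉ children parent root v := fun h => by
      simp only [children, mem_filter, mem_univ, true_and] at h
      exact not_isDescendant_of_isChild (d := (G.dist · root)) hlt h (.single ⟨hv, rfl⟩)
    rw [← sum_insert parent_not_child]
    exact sum_le_sum_of_subset_of_nonneg
      (insert_subset ((mem_neighborFinset _ _ _).2 (hadj v hv)) children_subset)
      fun u hu _ => nonneg u hu

end SimpleGraph

/-- A connected finite simple graph on n vertices has index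
r ≥ 2cos(π/(n+1)). -/
theorem stmt5 {n : ℕ} (G : SimpleGraph (Fin n)) [DecidableRel G.Adj]
    (hconn : G.Connected)
    (r : ℝ)
    (hr : IsEigen (G.adjMatrix ℝ) r ∧ ∀ μ, IsEigen (G.adjMatrix ℝ) μ → μ ≤ r) :
    2 * Real.cos (Real.pi / (n + 1)) ≤ r := by
  obtain ⟨x, hx_pos, hx⟩ := hconn.exists_pos_smul_le_adjMatrix_mulVec
  rw [Fintype.card_fin] at hx
  obtain ⟨v⟩ := hconn.nonempty
  exact (G.isHermitian_adjMatrix ℝ).le_of_smul_le_mulVec hr.2 (fun u => (hx_pos u).le)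
    (fun h => (hx_pos v).ne' (congrFun h v)) hx
end

section
/- For the path graph A_n on n vertices, the matrix I + √τ·B is positive semidefinite if and only if τ ≤ 1/(4cos²(π/(n+1))). -/
/-!
With `θ = π / (n + 1)`, the vector `v k = sin (k θ)` is positive on the vertices `1, …, n`,
vanishes at `0` and `n + 1`, and satisfies `v (k - 1) + v (k + 1) = 2 cos θ · v k`. This gives
the ground-state identity
`2 cos θ ∑ y_k² + 2 ∑ y_k y_{k+1} = ∑ v_k v_{k+1} (y_k / v_k + y_{k+1} / v_{k+1})²`,
so `yᵀ B y ≥ -2 cos θ ‖y‖²`, with equality for `y_k = (-1)^k v_k`. Hence `I + t B` is positive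
semidefinite exactly when `2 t cos θ ≤ 1`, and `t = √τ` gives the bound.
-/

/-- Adjacency matrix of the path graph on `n` vertices: the tridiagonal 0-1 matrix. -/
def pathMatrix (n : ℕ) : Matrix (Fin n) (Fin n) ℝ :=
  Matrix.of fun i j => if (i : ℕ) + 1 = (j : ℕ) ∨ (j : ℕ) + 1 = (i : ℕ) then 1 else 0

open Finset Matrix Real

def shiftMatrix (n : ℕ) : Matrix (Fin n) (Fin n) ℝ :=
  Matrix.of fun i j => if (i : ℕ) + 1 = (j : ℕ) then 1 else 0

theorem pathMatrix_eq_shiftMatrix_add_transpose (n : ℕ) :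
    pathMatrix n = shiftMatrix n + (shiftMatrix n)ᵀ := by
  ext i j
  by_cases h : (j : ℕ) + 1 = (i : ℕ)
  · have : (i : ℕ) + 1 ≠ j := by omega
    simp [pathMatrix, shiftMatrix, h, this]
  · by_cases h' : (i : ℕ) + 1 = j <;> simp [pathMatrix, shiftMatrix, h, h']

theorem pathMatrix_isHermitian (n : ℕ) : (pathMatrix n).IsHermitian := by
  rw [IsHermitian, conjTranspose_eq_transpose_of_trivial, pathMatrix_eq_shiftMatrix_add_transpose,
    transpose_add, transpose_transpose, add_comm]

theorem dotProduct_shiftMatrix_mulVec {m : ℕ} (x : Fin (m + 1) → ℝ) :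
    x ⬝ᵥ (shiftMatrix (m + 1) *ᵥ x) = ∑ i : Fin m, x i.castSucc * x i.succ := by
  simp only [dotProduct, mulVec, shiftMatrix, of_apply, mul_sum]
  rw [sum_comm, Fin.sum_univ_succ]
  have hsucc (i : Fin m) (j : Fin (m + 1)) : (j : ℕ) + 1 = i.succ ↔ j = i.castSucc := by
    simp [Fin.ext_iff]
  simp only [hsucc, Fin.val_zero, Nat.add_one_ne_zero, ite_mul, one_mul, zero_mul, mul_ite,
    mul_zero, if_false, sum_const_zero, zero_add, sum_ite_eq', mem_univ, if_true]

theorem dotProduct_pathMatrix_mulVec {m : ℕ} (x : Fin (m + 1) → ℝ) :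
    x ⬝ᵥ (pathMatrix (m + 1) *ᵥ x) = 2 * ∑ i : Fin m, x i.castSucc * x i.succ := by
  rw [pathMatrix_eq_shiftMatrix_add_transpose, add_mulVec, dotProduct_add, mulVec_transpose,
    dotProduct_comm x (x ᵥ* _), ← dotProduct_mulVec, dotProduct_shiftMatrix_mulVec, two_mul]

theorem dotProduct_one_add_smul_pathMatrix_mulVec {m : ℕ} (t : ℝ) (x : Fin (m + 1) → ℝ) :
    x ⬝ᵥ (((1 : Matrix (Fin (m + 1)) (Fin (m + 1)) ℝ) + t • pathMatrix (m + 1)) *ᵥ x) =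
      ∑ i, x i ^ 2 + t * (2 * ∑ i : Fin m, x i.castSucc * x i.succ) := by
  rw [add_mulVec, one_mulVec, smul_mulVec, dotProduct_add, dotProduct_smul,
    dotProduct_pathMatrix_mulVec, smul_eq_mul]
  simp only [dotProduct, sq]

theorem div_mul_sq_add_div_mul_sq_add_two_mul_nonneg {a b : ℝ} (ha : 0 < a) (hb : 0 < b)
    (y z : ℝ) : 0 ≤ b / a * y ^ 2 + a / b * z ^ 2 + 2 * y * z := by
  have hsq : b / a * y ^ 2 + a / b * z ^ 2 + 2 * y * z = (b * y + a * z) ^ 2 / (a * b) := by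
    field_simp
    ring
  rw [hsq]
  positivity

/-- `k ↦ u (k + 1)`, `k ≤ m`, is an eigenvector of `pathMatrix (m + 1)` for the eigenvalue `μ`;
the boundary values `u 0 = u (m + 2) = 0` make the three-term recurrence hold at both ends. -/
structure PathEigenseq (m : ℕ) (μ : ℝ) (u : ℕ → ℝ) : Prop where
  zero : u 0 = 0
  last : u (m + 2) = 0
  add_add : ∀ k, u k + u (k + 2) = μ * u (k + 1)

namespace PathEigenseq

variable {m : ℕ} {μ : ℝ} {u : ℕ → ℝ}

theorem sum_ratio_mul_sq (hu : PathEigenseq m μ u) (hne : ∀ k < m + 1, u (k + 1) ≠ 0)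
    (y : Fin (m + 1) → ℝ) :
    ∑ i : Fin m,
        (u (i + 2) / u (i + 1) * y i.castSucc ^ 2 + u (i + 1) / u (i + 2) * y i.succ ^ 2) =
      μ * ∑ i, y i ^ 2 := by
  have hfirst : ∑ i : Fin m, u (i + 2) / u (i + 1) * y i.castSucc ^ 2 =
      ∑ i : Fin (m + 1), u (i + 2) / u (i + 1) * y i ^ 2 := by
    simp [Fin.sum_univ_castSucc, hu.last]
  have hsecond : ∑ i : Fin m, u (i + 1) / u (i + 2) * y i.succ ^ 2 =
      ∑ i : Fin (m + 1), u i / u (i + 1) * y i ^ 2 := by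
    simp [Fin.sum_univ_succ, hu.zero]
  rw [sum_add_distrib, hfirst, hsecond, ← sum_add_distrib, mul_sum]
  refine sum_congr rfl fun i _ => ?_
  rw [← add_mul, ← add_div, add_comm, hu.add_add, mul_div_cancel_right₀ _ (hne i i.isLt)]

theorem neg_mul_sum_sq_le (hu : PathEigenseq m μ u) (hpos : ∀ k < m + 1, 0 < u (k + 1))
    (y : Fin (m + 1) → ℝ) :
    -(μ * ∑ i, y i ^ 2) ≤ 2 * ∑ i : Fin m, y i.castSucc * y i.succ := by
  rw [← hu.sum_ratio_mul_sq (fun k hk => (hpos k hk).ne') y, ← sum_neg_distrib, mul_sum]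
  refine sum_le_sum fun i _ => ?_
  linarith [div_mul_sq_add_div_mul_sq_add_two_mul_nonneg (hpos i (by omega))
    (hpos (i + 1) (by omega)) (y i.castSucc) (y i.succ)]

theorem two_mul_sum_eq_of_alternating (hu : PathEigenseq m μ u)
    (hne : ∀ k < m + 1, u (k + 1) ≠ 0)
    {y : Fin (m + 1) → ℝ} (hy : ∀ i, y i = (-1) ^ (i : ℕ) * u (i + 1)) :
    2 * ∑ i : Fin m, y i.castSucc * y i.succ = -(μ * ∑ i, y i ^ 2) := by
  rw [← hu.sum_ratio_mul_sq hne y, ← sum_neg_distrib, mul_sum]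
  refine sum_congr rfl fun i _ => ?_
  have h1 : u (i + 1) ≠ 0 := hne i (by omega)
  have h2 : u (i + 2) ≠ 0 := hne (i + 1) (by omega)
  simp only [hy, Fin.val_castSucc, Fin.val_succ, pow_succ]
  field_simp
  ring_nf

end PathEigenseq

theorem pathEigenseq_sin {m : ℕ} {θ : ℝ} (hθ : (m + 2) * θ = π) :
    PathEigenseq m (2 * cos θ) fun k => sin (k * θ) where
  zero := by simp
  last := by push_cast; rw [hθ, sin_pi]
  add_add k := by
    have hk : (k : ℝ) * θ = (k + 1) * θ - θ := by ring
    have hk2 : ((k + 2 : ℕ) : ℝ) * θ = (k + 1) * θ + θ := by push_cast; ring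
    rw [hk, hk2, Nat.cast_add_one, sin_sub, sin_add]
    ring

theorem sin_succ_mul_pos {m : ℕ} {θ : ℝ} (hθ : (m + 2) * θ = π) {k : ℕ} (hk : k < m + 1) :
    0 < sin ((k + 1 : ℕ) * θ) := by
  have hθpos : 0 < θ := by
    by_contra! h
    nlinarith [pi_pos, (by positivity : (0 : ℝ) < m + 2)]
  have hk' : ((k + 1 : ℕ) : ℝ) < m + 2 := by exact_mod_cast (by omega : k + 1 < m + 2)
  apply sin_pos_of_pos_of_lt_pi (by positivity)
  rw [← hθ]
  exact mul_lt_mul_of_pos_right hk' hθpos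

theorem posSemidef_one_add_smul_pathMatrix_iff {n : ℕ} (hn : 0 < n) {t : ℝ} (ht : 0 ≤ t) :
    ((1 : Matrix (Fin n) (Fin n) ℝ) + t • pathMatrix n).PosSemidef ↔
      2 * cos (π / (n + 1)) * t ≤ 1 := by
  obtain ⟨m, rfl⟩ : ∃ m, n = m + 1 := ⟨n - 1, by omega⟩
  set θ := π / ((m + 1 : ℕ) + 1 : ℝ)
  have hθ : (m + 2) * θ = π := by
    simp only [θ]; push_cast; field_simp; ring
  have hu := pathEigenseq_sin hθ
  have hpos : ∀ k < m + 1, 0 < sin ((k + 1 : ℕ) * θ) := fun k hk => sin_succ_mul_pos hθ hk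
  constructor
  · intro h
    set y : Fin (m + 1) → ℝ := fun i => (-1) ^ (i : ℕ) * sin ((i + 1 : ℕ) * θ)
    have hform := h.dotProduct_mulVec_nonneg y
    rw [star_trivial, dotProduct_one_add_smul_pathMatrix_mulVec,
      hu.two_mul_sum_eq_of_alternating (fun k hk => (hpos k hk).ne') (fun i => rfl)] at hform
    have hy : 0 < ∑ i, y i ^ 2 := by
      rw [Fin.sum_univ_succ]
      exact add_pos_of_pos_of_nonneg (by simpa [y] using pow_pos (hpos 0 m.succ_pos) 2)
        (sum_nonneg fun i _ => sq_nonneg _)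
    nlinarith
  · intro h
    refine PosSemidef.of_dotProduct_mulVec_nonneg
      (isHermitian_one.add ((pathMatrix_isHermitian _).smul (IsSelfAdjoint.all t))) fun x => ?_
    rw [star_trivial, dotProduct_one_add_smul_pathMatrix_mulVec]
    have hlower := mul_le_mul_of_nonneg_left (hu.neg_mul_sum_sq_le hpos x) ht
    have hsq : 0 ≤ ∑ i, x i ^ 2 := by positivity
    nlinarith

theorem stmt10_general (n : ℕ) (hn : 2 ≤ n) (τ : ℝ) :
    ((1 : Matrix (Fin n) (Fin n) ℝ) + Real.sqrt τ • pathMatrix n).PosSemidef ↔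
      τ ≤ 1 / (4 * Real.cos (Real.pi / (n + 1)) ^ 2) := by
  have hcos : 0 < cos (π / (n + 1)) := by
    refine cos_pos_of_mem_Ioo ⟨by linarith [pi_pos, (by positivity : 0 < π / (n + 1))], ?_⟩
    rw [div_lt_div_iff_of_pos_left pi_pos (by positivity) two_pos]
    have : (2 : ℝ) ≤ n := by exact_mod_cast hn
    linarith
  rw [posSemidef_one_add_smul_pathMatrix_iff (by omega) (sqrt_nonneg τ),
    ← le_div_iff₀' (by positivity), sqrt_le_left (by positivity), div_pow, mul_pow]
  norm_num

/-- For the path graph on n ≥ 2 vertices with adjacency matrix B and τ > 0,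
I + √τ·B is positive semidefinite iff τ ≤ 1/(4cos²(π/(n+1))). -/
theorem stmt10 (n : ℕ) (hn : 2 ≤ n) (τ : ℝ) (hτ : 0 < τ) :
    ((1 : Matrix (Fin n) (Fin n) ℝ) + Real.sqrt τ • pathMatrix n).PosSemidef ↔
      τ ≤ 1 / (4 * Real.cos (Real.pi / (n + 1)) ^ 2) :=
  stmt10_general n hn τ
end

section
/- If Γ is a finite simple graph each of whose connected components is a proper subgraph of one of the extended Dynkin diagrams Ã_n, D̃_n, Ẽ_6, Ẽ_7, Ẽ_8, then the largest eigenvalue of the adjacency matrix of Γ is strictly less than 2. -/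
/-- The cycle graph Ãₙ₋₁ on n vertices. -/
def cycleGraph (n : ℕ) : SimpleGraph (Fin n) :=
  SimpleGraph.fromRel fun i j => ((i : ℕ) + 1) % n = (j : ℕ)

/-- The extended Dynkin diagram D̃ₙ on n+1 vertices: central path 2 − ⋯ − (n−2) with
leaves 0, 1 attached to vertex 2 and leaves n−1, n attached to vertex n−2. -/
def DtildeGraph (n : ℕ) : SimpleGraph (Fin (n + 1)) :=
  SimpleGraph.fromRel fun i j =>
    ((i : ℕ) = 0 ∧ (j : ℕ) = 2) ∨ ((i : ℕ) = 1 ∧ (j : ℕ) = 2) ∨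
      (2 ≤ (i : ℕ) ∧ (j : ℕ) = (i : ℕ) + 1 ∧ (j : ℕ) ≤ n - 2) ∨
      ((i : ℕ) = n - 2 ∧ (j : ℕ) = n - 1) ∨ ((i : ℕ) = n - 2 ∧ (j : ℕ) = n)

/-- The extended Dynkin diagram Ẽ₆: path 0 − ⋯ − 4, leaf branch 2 − 5 − 6. -/
def E6tGraph : SimpleGraph (Fin 7) :=
  SimpleGraph.fromRel fun i j =>
    ((i : ℕ) + 1 = (j : ℕ) ∧ (j : ℕ) ≤ 4) ∨ ((i : ℕ) = 2 ∧ (j : ℕ) = 5) ∨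
      ((i : ℕ) = 5 ∧ (j : ℕ) = 6)

/-- The extended Dynkin diagram Ẽ₇: path 0 − ⋯ − 6, leaf 7 attached to vertex 3. -/
def E7tGraph : SimpleGraph (Fin 8) :=
  SimpleGraph.fromRel fun i j =>
    ((i : ℕ) + 1 = (j : ℕ) ∧ (j : ℕ) ≤ 6) ∨ ((i : ℕ) = 3 ∧ (j : ℕ) = 7)

/-- The extended Dynkin diagram Ẽ₈: path 0 − ⋯ − 7, leaf 8 attached to vertex 2. -/
def E8tGraph : SimpleGraph (Fin 9) :=
  SimpleGraph.fromRel fun i j =>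
    ((i : ℕ) + 1 = (j : ℕ) ∧ (j : ℕ) ≤ 7) ∨ ((i : ℕ) = 2 ∧ (j : ℕ) = 8)

/-- `H` is (isomorphic to) a proper subgraph of `G`: it embeds into `G` preserving
adjacency, missing at least one vertex or at least one edge of `G`. -/
def ProperlyEmbeds {V W : Type*} (H : SimpleGraph V) (G : SimpleGraph W) : Prop :=
  ∃ f : V ↪ W, (∀ i j, H.Adj i j → G.Adj (f i) (f j)) ∧
    (¬ Function.Surjective f ∨ ∃ i j, G.Adj (f i) (f j) ∧ ¬ H.Adj i j)

/-!
Each extended Dynkin diagram `D` is connected and carries a positive vector `w` with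
`A_D w = 2 w` (constant on `Ãₙ`, the marks of the diagram otherwise). Let `v` be an eigenvector
of `Γ` for `μ`. On a component `C` where `v ≠ 0` the vector `|v|` satisfies `|μ| |v| ≤ A_C |v|`,
and extending it by zero along `C ⊆ D` gives `U ≥ 0`, `U ≠ 0` with `|μ| U ≤ A_D U`. Pairing
with `w` and using the symmetry of `A_D` gives `|μ| ≤ 2`. If `|μ| = 2`, the same pairing forces
`A_D U = 2 U`, and then `U > 0` on all of the connected `D`; but a vertex of `D` outside `C` has
`U = 0`, and an edge of `D` missing from `C` makes the inequality at its endpoint strict.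
-/

open Finset Matrix

namespace SimpleGraph

theorem preconnected_of_exists_adj_lt {W : Type*} (G : SimpleGraph W) (r : W) (d : W → ℕ)
    (h : ∀ x ≠ r, ∃ y, G.Adj x y ∧ d y < d x) : G.Preconnected := by
  have hreach (x : W) : G.Reachable x r := by
    induction x using (measure d).wf.induction with
    | _ x ih =>
      by_cases hx : x = r
      · exact hx ▸ .rfl
      · obtain ⟨y, hxy, hy⟩ := h x hx
        exact hxy.reachable.trans (ih y hy)
  exact fun x y => (hreach x).trans (hreach y).symm

variable {V W : Type*} [Fintype V] [Fintype W]

def HasPosEigenvector (G : SimpleGraph W) [DecidableRel G.Adj] (ρ : ℝ) : Prop :=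
  ∃ w : W → ℝ, (∀ x, 0 < w x) ∧ G.adjMatrix ℝ *ᵥ w = ρ • w

theorem HasPosEigenvector.of_nat {G : SimpleGraph W} [DecidableRel G.Adj] {k : ℕ} (w : W → ℕ)
    (hw : ∀ x, 0 < w x) (h : G.adjMatrix ℕ *ᵥ w = k • w) : G.HasPosEigenvector k := by
  refine ⟨fun x => w x, fun x => Nat.cast_pos.mpr (hw x), funext fun x => ?_⟩
  simpa [adjMatrix_mulVec_apply] using congrArg (Nat.cast : ℕ → ℝ) (congrFun h x)

theorem IsRegularOfDegree.hasPosEigenvector {G : SimpleGraph W} [DecidableRel G.Adj] {d : ℕ}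
    (hd : G.IsRegularOfDegree d) : G.HasPosEigenvector d :=
  ⟨fun _ => 1, fun _ => one_pos, funext fun x => by
    simpa using adjMatrix_mulVec_const_apply_of_regular (α := ℝ) (a := 1) hd (v := x)⟩

section PerronFrobenius

variable {G : SimpleGraph W} [DecidableRel G.Adj] {w U : W → ℝ} {ρ μ : ℝ}

theorem adjMatrix_mulVec_dotProduct (x y : W → ℝ) :
    (G.adjMatrix ℝ *ᵥ x) ⬝ᵥ y = x ⬝ᵥ (G.adjMatrix ℝ *ᵥ y) := by
  rw [dotProduct_comm, dotProduct_mulVec, dotProduct_comm, ← vecMul_transpose, transpose_adjMatrix]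

theorem le_of_smul_le_adjMatrix_mulVec (hw : ∀ x, 0 < w x) (hAw : G.adjMatrix ℝ *ᵥ w = ρ • w)
    (hU : 0 ≤ U) (hU0 : U ≠ 0) (hμ : μ • U ≤ G.adjMatrix ℝ *ᵥ U) : μ ≤ ρ := by
  obtain ⟨x₀, hx₀⟩ := Function.ne_iff.mp hU0
  have hpos : 0 < U ⬝ᵥ w :=
    sum_pos' (fun x _ => mul_nonneg (hU x) (hw x).le)
      ⟨x₀, mem_univ _, mul_pos (lt_of_le_of_ne (hU x₀) (Ne.symm hx₀)) (hw x₀)⟩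
  refine le_of_mul_le_mul_right ?_ hpos
  calc μ * (U ⬝ᵥ w) = (μ • U) ⬝ᵥ w := (smul_dotProduct μ U w).symm
    _ ≤ (G.adjMatrix ℝ *ᵥ U) ⬝ᵥ w :=
      dotProduct_le_dotProduct_of_nonneg_right hμ fun x => (hw x).le
    _ = ρ * (U ⬝ᵥ w) := by rw [adjMatrix_mulVec_dotProduct, hAw, dotProduct_smul, smul_eq_mul]

theorem adjMatrix_mulVec_eq_of_smul_le (hw : ∀ x, 0 < w x) (hAw : G.adjMatrix ℝ *ᵥ w = ρ • w)
    (hU : ρ • U ≤ G.adjMatrix ℝ *ᵥ U) : G.adjMatrix ℝ *ᵥ U = ρ • U := by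
  set D := G.adjMatrix ℝ *ᵥ U - ρ • U
  have hD : 0 ≤ D := sub_nonneg.mpr hU
  have hDw : D ⬝ᵥ w = 0 := by
    rw [sub_dotProduct, adjMatrix_mulVec_dotProduct, hAw, dotProduct_smul, smul_dotProduct,
      dotProduct_comm, sub_self]
  have hterm := (sum_eq_zero_iff_of_nonneg fun x _ => mul_nonneg (hD x) (hw x).le).mp hDw
  refine sub_eq_zero.mp (funext fun x => ?_)
  exact (mul_eq_zero.mp (hterm x (mem_univ x))).resolve_right (hw x).ne'

theorem pos_of_adjMatrix_mulVec_le (hG : G.Preconnected) (hU : 0 ≤ U)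
    (hAU : G.adjMatrix ℝ *ᵥ U ≤ ρ • U) {x₀ : W} (hx₀ : 0 < U x₀) (x : W) : 0 < U x := by
  have hstep {y z : W} (hyz : G.Adj y z) (hy : 0 < U y) : 0 < U z := by
    have : U y ≤ ρ * U z :=
      calc U y ≤ ∑ v ∈ G.neighborFinset z, U v :=
            single_le_sum (fun v _ => hU v) ((mem_neighborFinset _ _ _).mpr hyz.symm)
        _ = (G.adjMatrix ℝ *ᵥ U) z := (adjMatrix_mulVec_apply _ _ _).symm
        _ ≤ ρ * U z := hAU z
    refine lt_of_le_of_ne (hU z) fun hz => ?_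
    rw [← hz, mul_zero] at this
    exact this.not_gt hy
  obtain ⟨p⟩ := hG x₀ x
  induction p with
  | nil => exact hx₀
  | cons h _ ih => exact ih (hstep h hx₀)

end PerronFrobenius

theorem _root_.Finset.sum_map_extend {α β M : Type*} [AddCommMonoid M] (s : Finset α)
    (e : α ↪ β) (u : α → M) (u' : β → M) :
    ∑ y ∈ s.map e, Function.extend e u u' y = ∑ i ∈ s, u i := by
  simp [e.injective.extend_apply]

section Embedding

variable {H : SimpleGraph V} {G : SimpleGraph W} [DecidableRel H.Adj] [DecidableRel G.Adj]
  (e : V ↪ W) {u : V → ℝ} {μ : ℝ}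

theorem map_neighborFinset_subset (he : ∀ i j, H.Adj i j → G.Adj (e i) (e j)) (i : V) :
    (H.neighborFinset i).map e ⊆ G.neighborFinset (e i) := by
  intro y hy
  obtain ⟨j, hj, rfl⟩ := mem_map.mp hy
  simpa using he i j ((mem_neighborFinset _ _ _).mp hj)

theorem adjMatrix_mulVec_le_extend (he : ∀ i j, H.Adj i j → G.Adj (e i) (e j)) (hu : 0 ≤ u)
    (i : V) : (H.adjMatrix ℝ *ᵥ u) i ≤ (G.adjMatrix ℝ *ᵥ Function.extend e u 0) (e i) := by
  rw [adjMatrix_mulVec_apply, adjMatrix_mulVec_apply, ← sum_map_extend _ e u 0]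
  exact sum_le_sum_of_subset_of_nonneg (map_neighborFinset_subset e he i)
    fun y _ _ => Function.extend_nonneg hu le_rfl y

theorem adjMatrix_mulVec_lt_extend (he : ∀ i j, H.Adj i j → G.Adj (e i) (e j)) (hu : 0 ≤ u)
    {i j : V} (hG : G.Adj (e i) (e j)) (hH : ¬ H.Adj i j) (hj : 0 < u j) :
    (H.adjMatrix ℝ *ᵥ u) i < (G.adjMatrix ℝ *ᵥ Function.extend e u 0) (e i) := by
  rw [adjMatrix_mulVec_apply, adjMatrix_mulVec_apply, ← sum_map_extend _ e u 0]
  refine sum_lt_sum_of_subset (map_neighborFinset_subset e he i) (i := e j) (by simpa)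
    (by simpa using hH) (by rwa [e.injective.extend_apply])
    fun y _ _ => Function.extend_nonneg hu le_rfl y

theorem smul_extend_le_adjMatrix_mulVec_extend (he : ∀ i j, H.Adj i j → G.Adj (e i) (e j))
    (hu : 0 ≤ u) (hμ : μ • u ≤ H.adjMatrix ℝ *ᵥ u) :
    μ • Function.extend e u 0 ≤ G.adjMatrix ℝ *ᵥ Function.extend e u 0 := by
  intro y
  by_cases hy : ∃ i, e i = y
  · obtain ⟨i, rfl⟩ := hy
    simpa [e.injective.extend_apply] using (hμ i).trans (adjMatrix_mulVec_le_extend e he hu i)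
  · rw [Pi.smul_apply, Function.extend_apply' _ _ _ hy, Pi.zero_apply, smul_zero,
      adjMatrix_mulVec_apply]
    exact sum_nonneg fun z _ => Function.extend_nonneg hu le_rfl z

end Embedding

theorem lt_of_properlyEmbeds {H : SimpleGraph V} {G : SimpleGraph W} [DecidableRel H.Adj]
    [DecidableRel G.Adj] {u : V → ℝ} {ρ μ : ℝ} (hG : G.Preconnected) (hρ : G.HasPosEigenvector ρ)
    (hHG : ProperlyEmbeds H G) (hu : 0 ≤ u) (hu0 : u ≠ 0) (hμ : μ • u ≤ H.adjMatrix ℝ *ᵥ u) :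
    μ < ρ := by
  obtain ⟨w, hw, hAw⟩ := hρ
  obtain ⟨e, he, hproper⟩ := hHG
  set U := Function.extend e u 0
  have hUe (i : V) : U (e i) = u i := e.injective.extend_apply u 0 i
  obtain ⟨i₀, hi₀⟩ := Function.ne_iff.mp hu0
  have hU : 0 ≤ U := Function.extend_nonneg hu le_rfl
  have hU0 : U ≠ 0 := Function.ne_iff.mpr ⟨e i₀, by rwa [hUe]⟩
  have hμU : μ • U ≤ G.adjMatrix ℝ *ᵥ U := smul_extend_le_adjMatrix_mulVec_extend e he hu hμ
  refine (le_of_smul_le_adjMatrix_mulVec hw hAw hU hU0 hμU).lt_of_ne ?_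
  rintro rfl
  have hAU := adjMatrix_mulVec_eq_of_smul_le hw hAw hμU
  have hUpos := pos_of_adjMatrix_mulVec_le hG hU hAU.le (x₀ := e i₀)
    (by rw [hUe]; exact lt_of_le_of_ne (hu i₀) (Ne.symm hi₀))
  rcases hproper with hsurj | ⟨i, j, hGij, hHij⟩
  · obtain ⟨y, hy⟩ := not_forall.mp hsurj
    exact (hUpos y).ne' (Function.extend_apply' _ _ _ hy)
  · have := adjMatrix_mulVec_lt_extend e he hu hGij hHij (by rw [← hUe]; exact hUpos _)
    rw [hAU, Pi.smul_apply, hUe] at this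
    exact (hμ i).not_gt this

theorem adjMatrix_induce_supp_mulVec {α : Type*} [NonAssocSemiring α] {G : SimpleGraph V}
    [DecidableRel G.Adj] (c : G.ConnectedComponent) [Fintype c.supp]
    [DecidableRel (G.induce c.supp).Adj] (x : V → α) :
    (G.induce c.supp).adjMatrix α *ᵥ (fun i => x i) = fun i : c.supp => (G.adjMatrix α *ᵥ x) i := by
  funext i
  have hmap : ((G.induce c.supp).neighborFinset i).map (Function.Embedding.subtype _) =
      G.neighborFinset i := by
    ext y
    simp only [mem_map, mem_neighborFinset, comap_adj, Function.Embedding.subtype_apply,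
      Subtype.exists, exists_and_right, exists_eq_right]
    exact ⟨fun ⟨_, h⟩ => h, fun h => ⟨c.mem_supp_of_adj_mem_supp i.2 h, h⟩⟩
  rw [adjMatrix_mulVec_apply, adjMatrix_mulVec_apply, ← hmap, sum_map]
  rfl

theorem abs_smul_abs_le_adjMatrix_mulVec_abs {G : SimpleGraph V} [DecidableRel G.Adj]
    {v : V → ℝ} {μ : ℝ} (hv : G.adjMatrix ℝ *ᵥ v = μ • v) :
    |μ| • |v| ≤ G.adjMatrix ℝ *ᵥ |v| := by
  intro x
  have := abs_sum_le_sum_abs v (G.neighborFinset x)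
  rw [← adjMatrix_mulVec_apply, hv] at this
  simpa [abs_mul] using this

theorem sum_neighborFinset_fromRel_fin {M : Type*} [AddCommMonoid M] {k : ℕ}
    (r : ℕ → ℕ → Prop) [DecidableRel r]
    [DecidableRel (fromRel fun i j : Fin k => r i j).Adj]
    (x : Fin k) (w : ℕ → M) :
    ∑ y ∈ (fromRel fun i j : Fin k => r i j).neighborFinset x, w y =
      ∑ m ∈ (range k).filter (fun m => (x : ℕ) ≠ m ∧ (r x m ∨ r m x)), w m := by
  rw [neighborFinset_eq_filter, sum_filter, sum_filter,
    ← Fin.sum_univ_eq_sum_range (fun m => if (x : ℕ) ≠ m ∧ (r x m ∨ r m x) then w m else 0)]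
  simp only [fromRel_adj, Ne, Fin.ext_iff]

end SimpleGraph

instance (n : ℕ) : DecidableRel (cycleGraph n).Adj := by unfold cycleGraph; infer_instance

theorem cycleGraph_eq_simpleGraph_cycleGraph (n : ℕ) :
    cycleGraph (n + 2) = SimpleGraph.cycleGraph (n + 2) := by
  have hsucc (i j : Fin (n + 2)) : ((i : ℕ) + 1) % (n + 2) = j ↔ j = i + 1 := by
    simp [Fin.ext_iff, Fin.val_add, eq_comm]
  have hne (i : Fin (n + 2)) : i ≠ i + 1 := by simp
  ext i j
  simp only [cycleGraph, SimpleGraph.fromRel_adj, hsucc, SimpleGraph.cycleGraph_adj,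
    sub_eq_iff_eq_add]
  grind

theorem cycleGraph_preconnected (n : ℕ) : (cycleGraph n).Preconnected := by
  rcases n with _ | _ | n
  · exact fun x => x.elim0
  · exact fun x y => Subsingleton.elim (α := Fin 1) x y ▸ .rfl
  · rw [cycleGraph_eq_simpleGraph_cycleGraph]
    exact SimpleGraph.cycleGraph_preconnected

theorem cycleGraph_isRegularOfDegree {n : ℕ} (hn : 3 ≤ n) :
    (cycleGraph n).IsRegularOfDegree 2 := by
  obtain ⟨n, rfl⟩ := Nat.exists_eq_add_of_le' hn
  intro v
  convert SimpleGraph.cycleGraph_degree_three_le (v := v) using 2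
  exact cycleGraph_eq_simpleGraph_cycleGraph (n + 1)

-- `DtildeGraph n` is definitionally `fromRel` of this relation on vertex labels.
def dtildeRel (n a b : ℕ) : Prop :=
  (a = 0 ∧ b = 2) ∨ (a = 1 ∧ b = 2) ∨ (2 ≤ a ∧ b = a + 1 ∧ b ≤ n - 2) ∨
    (a = n - 2 ∧ b = n - 1) ∨ (a = n - 2 ∧ b = n)

instance (n : ℕ) : DecidableRel (dtildeRel n) := fun a b => by unfold dtildeRel; infer_instance

instance (n : ℕ) : DecidableRel (DtildeGraph n).Adj :=
  inferInstanceAs (DecidableRel (SimpleGraph.fromRel fun i j : Fin (n + 1) => dtildeRel n i j).Adj)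

def dtildeWeight (n m : ℕ) : ℕ := if m ≤ 1 ∨ n - 1 ≤ m then 1 else 2

theorem sum_dtildeWeight_neighbors {n a : ℕ} (hn : 4 ≤ n) (ha : a ≤ n) :
    ∑ m ∈ (range (n + 1)).filter (fun m => a ≠ m ∧ (dtildeRel n a m ∨ dtildeRel n m a)),
      dtildeWeight n m = 2 * dtildeWeight n a := by
  have hS (S : Finset ℕ)
      (hmem : ∀ m, m ∈ S ↔ m < n + 1 ∧ a ≠ m ∧ (dtildeRel n a m ∨ dtildeRel n m a)) :
      (range (n + 1)).filter (fun m => a ≠ m ∧ (dtildeRel n a m ∨ dtildeRel n m a)) = S := by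
    ext m; simp [hmem]
  simp only [dtildeWeight, dtildeRel] at hS ⊢
  rcases (by omega : a ≤ 1 ∨ (a = 2 ∧ n = 4) ∨ (a = 2 ∧ 4 < n) ∨ (3 ≤ a ∧ a + 3 ≤ n) ∨
    (a = n - 2 ∧ 4 < n) ∨ n - 1 ≤ a) with h | h | h | h | h | h
  · rw [hS {2} (by grind), sum_singleton]
    split_ifs <;> omega
  · rw [hS {0, 1, 3, 4} (by grind), sum_insert (by decide), sum_insert (by decide),
      sum_pair (by decide)]
    split_ifs <;> omega
  · rw [hS {0, 1, 3} (by grind), sum_insert (by decide), sum_pair (by decide)]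
    split_ifs <;> omega
  · rw [hS {a - 1, a + 1} (by grind), sum_pair (by omega)]
    split_ifs <;> omega
  · rw [hS {n - 3, n - 1, n} (by grind), sum_insert (by grind), sum_pair (by omega)]
    split_ifs <;> omega
  · rw [hS {n - 2} (by grind), sum_singleton]
    split_ifs <;> omega

theorem dtildeGraph_hasPosEigenvector {n : ℕ} (hn : 4 ≤ n) :
    (DtildeGraph n).HasPosEigenvector 2 := by
  have hA : (DtildeGraph n).adjMatrix ℕ *ᵥ (fun x => dtildeWeight n x) =
      2 • fun x : Fin (n + 1) => dtildeWeight n x := by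
    ext x
    rw [SimpleGraph.adjMatrix_mulVec_apply, Pi.smul_apply, smul_eq_mul]
    exact (SimpleGraph.sum_neighborFinset_fromRel_fin (dtildeRel n) x _).trans
      (sum_dtildeWeight_neighbors hn (by omega))
  exact SimpleGraph.HasPosEigenvector.of_nat _
    (fun x => by unfold dtildeWeight; split_ifs <;> omega) hA

theorem dtildeGraph_preconnected {n : ℕ} (hn : 4 ≤ n) : (DtildeGraph n).Preconnected := by
  refine SimpleGraph.preconnected_of_exists_adj_lt _ ⟨2, by omega⟩
    (fun x => if x.val ≤ 1 then n else x.val) ?_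
  rintro ⟨m, hm⟩ hm2
  rw [ne_eq, Fin.mk.injEq] at hm2
  refine ⟨⟨if m ≤ 1 then 2 else if m ≤ n - 2 then m - 1 else n - 2, by split_ifs <;> omega⟩,
    ?_, ?_⟩
  · simp only [DtildeGraph, SimpleGraph.fromRel_adj, ne_eq, Fin.ext_iff]
    split_ifs <;> omega
  · dsimp only
    split_ifs <;> omega

instance : DecidableRel E6tGraph.Adj := by unfold E6tGraph; infer_instance
instance : DecidableRel E7tGraph.Adj := by unfold E7tGraph; infer_instance
instance : DecidableRel E8tGraph.Adj := by unfold E8tGraph; infer_instance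

theorem e6tGraph_preconnected : E6tGraph.Preconnected :=
  SimpleGraph.preconnected_of_exists_adj_lt _ 0 Fin.val (by decide)

theorem e7tGraph_preconnected : E7tGraph.Preconnected :=
  SimpleGraph.preconnected_of_exists_adj_lt _ 0 Fin.val (by decide)

theorem e8tGraph_preconnected : E8tGraph.Preconnected :=
  SimpleGraph.preconnected_of_exists_adj_lt _ 0 Fin.val (by decide)

-- The weights are the marks of the diagrams (the coefficients of the null root).
theorem e6tGraph_hasPosEigenvector : E6tGraph.HasPosEigenvector 2 :=
  SimpleGraph.HasPosEigenvector.of_nat (k := 2) ![1, 2, 3, 2, 1, 2, 1] (by decide) (by decide)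

theorem e7tGraph_hasPosEigenvector : E7tGraph.HasPosEigenvector 2 :=
  SimpleGraph.HasPosEigenvector.of_nat (k := 2) ![1, 2, 3, 4, 3, 2, 1, 2] (by decide) (by decide)

theorem e8tGraph_hasPosEigenvector : E8tGraph.HasPosEigenvector 2 :=
  SimpleGraph.HasPosEigenvector.of_nat (k := 2) ![2, 4, 6, 5, 4, 3, 2, 1, 3] (by decide) (by decide)

/-- If every connected component of a finite simple graph Γ is a proper
subgraph of one of the extended Dynkin diagrams Ãₙ, D̃ₙ, Ẽ₆, Ẽ₇, Ẽ₈, then the largest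
adjacency eigenvalue of Γ is strictly less than 2. -/
theorem stmt13 {V : Type*} [Fintype V] (G : SimpleGraph V) [DecidableRel G.Adj]
    (hcomp : ∀ c : G.ConnectedComponent,
      (∃ n, 3 ≤ n ∧ ProperlyEmbeds (G.induce c.supp) (cycleGraph n)) ∨
      (∃ n, 4 ≤ n ∧ ProperlyEmbeds (G.induce c.supp) (DtildeGraph n)) ∨
      ProperlyEmbeds (G.induce c.supp) E6tGraph ∨
      ProperlyEmbeds (G.induce c.supp) E7tGraph ∨
      ProperlyEmbeds (G.induce c.supp) E8tGraph) :
    ∀ μ, IsEigen (G.adjMatrix ℝ) μ → μ < 2 := by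
  classical
  rintro μ ⟨v, hv0, hv⟩
  obtain ⟨i₀, hi₀⟩ := Function.ne_iff.mp hv0
  set c := G.connectedComponentMk i₀
  set u : c.supp → ℝ := fun i => |v i|
  have hu : 0 ≤ u := fun i => abs_nonneg _
  have hu0 : u ≠ 0 := Function.ne_iff.mpr ⟨⟨i₀, rfl⟩, abs_ne_zero.mpr hi₀⟩
  have hsub : |μ| • u ≤ (G.induce c.supp).adjMatrix ℝ *ᵥ u := by
    rw [show u = fun i : c.supp => |v| i from rfl, SimpleGraph.adjMatrix_induce_supp_mulVec]
    exact fun i => SimpleGraph.abs_smul_abs_le_adjMatrix_mulVec_abs hv i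
  have key {W : Type} [Fintype W] (D : SimpleGraph W) [DecidableRel D.Adj]
      (hD : D.Preconnected) (hρ : D.HasPosEigenvector 2)
      (h : ProperlyEmbeds (G.induce c.supp) D) : |μ| < 2 :=
    SimpleGraph.lt_of_properlyEmbeds hD hρ h hu hu0 hsub
  refine (le_abs_self μ).trans_lt ?_
  rcases hcomp c with ⟨n, hn, h⟩ | ⟨n, hn, h⟩ | h | h | h
  · exact key _ (cycleGraph_preconnected n)
      (by exact_mod_cast (cycleGraph_isRegularOfDegree hn).hasPosEigenvector) h
  · exact key _ (dtildeGraph_preconnected hn) (dtildeGraph_hasPosEigenvector hn) h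
  · exact key _ e6tGraph_preconnected e6tGraph_hasPosEigenvector h
  · exact key _ e7tGraph_preconnected e7tGraph_hasPosEigenvector h
  · exact key _ e8tGraph_preconnected e8tGraph_hasPosEigenvector h
end
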